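/- arXiv:cs/0508083 — 6 statements merged into one kernel-verified Lean document; each statement's English description precedes it below -/
import Mathlib

section
/- For b > -1 with b ≠ 0, the minimum over all real-valued length vectors l satisfying the Kraft inequality Σ 2^(-l_i) ≤ 1 of the β-exponential average F_b(p,l) = (1/b)·log₂(Σ_i p_i·2^(b·l_i)) equals the Rényi entropy of order α = 1/(1+b), namely H_α(p) = (1/(1-α))·log₂(Σ_i p_i^α). -/
/-! With `q i = 2 ^ (-l i)` the Kraft inequality reads `∑ q ≤ 1` and
`∑ p i * 2 ^ (b * l i) = ∑ p i * q i ^ (-b)`. Hölder's inequality in the form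
`∑ f ^ θ * g ^ (1 - θ) ≤ (∑ f) ^ θ * (∑ g) ^ (1 - θ)` compares this sum with `S ^ (1 + b)`,
`S = ∑ p i ^ α`: for `b > 0` take `θ = α`, `f = p q ^ (-b)`, `g = q`; for `-1 < b < 0` take
`θ = 1 + b`, `f = p ^ α`, `g = q`. Equality holds for the escort weights `q i = p i ^ α / S`. -/

open Real Finset

theorem Real.sum_rpow_mul_rpow_one_sub_le_of_nonneg {ι : Type*} (s : Finset ι) {θ : ℝ}
    (hθ₀ : 0 < θ) (hθ₁ : θ < 1) {f g : ι → ℝ} (hf : ∀ i ∈ s, 0 ≤ f i)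
    (hg : ∀ i ∈ s, 0 ≤ g i) :
    ∑ i ∈ s, f i ^ θ * g i ^ (1 - θ) ≤ (∑ i ∈ s, f i) ^ θ * (∑ i ∈ s, g i) ^ (1 - θ) := by
  have hθ' : 0 < 1 - θ := by linarith
  have hconj : HolderConjugate (1 / θ) (1 / (1 - θ)) :=
    holderConjugate_iff.mpr ⟨by rw [lt_div_iff₀ hθ₀]; linarith, by simp⟩
  have hpow : ∀ {c : ℝ}, 0 < c → ∀ x : ℝ, 0 ≤ x → (x ^ c) ^ (1 / c) = x := fun hc x hx => by
    rw [← rpow_mul hx, mul_one_div_cancel hc.ne', rpow_one]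
  have := inner_le_Lp_mul_Lq_of_nonneg s hconj (f := fun i => f i ^ θ)
    (g := fun i => g i ^ (1 - θ)) (fun i hi => rpow_nonneg (hf i hi) _)
    (fun i hi => rpow_nonneg (hg i hi) _)
  simpa only [one_div_one_div, sum_congr rfl fun i hi => hpow hθ₀ _ (hf i hi),
    sum_congr rfl fun i hi => hpow hθ' _ (hg i hi)] using this

theorem two_rpow_mul_eq_two_rpow_neg_rpow_neg (b l : ℝ) :
    (2 : ℝ) ^ (b * l) = ((2 : ℝ) ^ (-l)) ^ (-b) := by
  rw [← rpow_mul zero_le_two]; ring_nf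

section Kraft

variable {ι : Type*} [Fintype ι] {p q : ι → ℝ} {b : ℝ}

theorem rpow_sum_rpow_le_sum_mul_rpow_neg (hb : 0 < b) (hp : ∀ i, 0 ≤ p i)
    (hq : ∀ i, 0 < q i) (hq₁ : ∑ i, q i ≤ 1) :
    (∑ i, p i ^ (1 / (1 + b))) ^ (1 + b) ≤ ∑ i, p i * q i ^ (-b) := by
  have hb₁ : 0 < 1 + b := by linarith
  have hT : 0 ≤ ∑ i, p i * q i ^ (-b) :=
    sum_nonneg fun i _ => mul_nonneg (hp i) (rpow_nonneg (hq i).le _)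
  have hterm : ∀ i, p i ^ (1 / (1 + b)) =
      (p i * q i ^ (-b)) ^ (1 / (1 + b)) * q i ^ (1 - 1 / (1 + b)) := fun i => by
    rw [mul_rpow (hp i) (rpow_nonneg (hq i).le _), ← rpow_mul (hq i).le, mul_assoc,
      ← rpow_add (hq i)]
    field_simp
    norm_num
  have hS : ∑ i, p i ^ (1 / (1 + b)) ≤ (∑ i, p i * q i ^ (-b)) ^ (1 / (1 + b)) :=
    calc ∑ i, p i ^ (1 / (1 + b))
        = ∑ i, (p i * q i ^ (-b)) ^ (1 / (1 + b)) * q i ^ (1 - 1 / (1 + b)) :=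
          sum_congr rfl fun i _ => hterm i
      _ ≤ (∑ i, p i * q i ^ (-b)) ^ (1 / (1 + b)) * (∑ i, q i) ^ (1 - 1 / (1 + b)) :=
          sum_rpow_mul_rpow_one_sub_le_of_nonneg _ (by positivity)
            (by rw [div_lt_one hb₁]; linarith)
            (fun i _ => mul_nonneg (hp i) (rpow_nonneg (hq i).le _)) fun i _ => (hq i).le
      _ ≤ (∑ i, p i * q i ^ (-b)) ^ (1 / (1 + b)) := by
          refine mul_le_of_le_one_right (rpow_nonneg hT _) (rpow_le_one ?_ hq₁ ?_)
          · exact sum_nonneg fun i _ => (hq i).le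
          · rw [sub_nonneg, div_le_one hb₁]; linarith
  calc (∑ i, p i ^ (1 / (1 + b))) ^ (1 + b)
      ≤ ((∑ i, p i * q i ^ (-b)) ^ (1 / (1 + b))) ^ (1 + b) :=
        rpow_le_rpow (sum_nonneg fun i _ => rpow_nonneg (hp i) _) hS hb₁.le
    _ = ∑ i, p i * q i ^ (-b) := by
        rw [← rpow_mul hT, one_div_mul_cancel hb₁.ne', rpow_one]

theorem sum_mul_rpow_neg_le_rpow_sum_rpow (hb : -1 < b) (hb₀ : b < 0) (hp : ∀ i, 0 ≤ p i)
    (hq : ∀ i, 0 ≤ q i) (hq₁ : ∑ i, q i ≤ 1) :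
    ∑ i, p i * q i ^ (-b) ≤ (∑ i, p i ^ (1 / (1 + b))) ^ (1 + b) := by
  have hb₁ : 0 < 1 + b := by linarith
  calc ∑ i, p i * q i ^ (-b)
      = ∑ i, (p i ^ (1 / (1 + b))) ^ (1 + b) * q i ^ (1 - (1 + b)) := by
        refine sum_congr rfl fun i _ => ?_
        rw [← rpow_mul (hp i), one_div_mul_cancel hb₁.ne', rpow_one]
        ring_nf
    _ ≤ (∑ i, p i ^ (1 / (1 + b))) ^ (1 + b) * (∑ i, q i) ^ (1 - (1 + b)) :=
        sum_rpow_mul_rpow_one_sub_le_of_nonneg _ hb₁ (by linarith)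
          (fun i _ => rpow_nonneg (hp i) _) fun i _ => hq i
    _ ≤ (∑ i, p i ^ (1 / (1 + b))) ^ (1 + b) :=
        mul_le_of_le_one_right (rpow_nonneg (sum_nonneg fun i _ => rpow_nonneg (hp i) _) _)
          (rpow_le_one (sum_nonneg fun i _ => hq i) hq₁ (by linarith))

theorem one_add_div_mul_logb_sum_rpow_le [Nonempty ι] (hb : -1 < b) (hb₀ : b ≠ 0)
    (hp : ∀ i, 0 < p i) (hq : ∀ i, 0 < q i) (hq₁ : ∑ i, q i ≤ 1) :
    (1 + b) / b * logb 2 (∑ i, p i ^ (1 / (1 + b))) ≤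
      1 / b * logb 2 (∑ i, p i * q i ^ (-b)) := by
  have hS : 0 < ∑ i, p i ^ (1 / (1 + b)) :=
    sum_pos (fun i _ => rpow_pos_of_pos (hp i) _) univ_nonempty
  have hT : 0 < ∑ i, p i * q i ^ (-b) :=
    sum_pos (fun i _ => mul_pos (hp i) (rpow_pos_of_pos (hq i) _)) univ_nonempty
  rw [div_eq_mul_one_div (1 + b), mul_comm (1 + b), mul_assoc,
    ← logb_rpow_eq_mul_logb_of_pos hS]
  rcases hb₀.lt_or_gt with hneg | hpos
  · refine mul_le_mul_of_nonpos_left (logb_le_logb_of_le one_lt_two hT ?_) (by simp [hneg.le])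
    exact sum_mul_rpow_neg_le_rpow_sum_rpow hb hneg (fun i => (hp i).le) (fun i => (hq i).le) hq₁
  · refine mul_le_mul_of_nonneg_left (logb_le_logb_of_le one_lt_two (by positivity) ?_)
      (by positivity)
    exact rpow_sum_rpow_le_sum_mul_rpow_neg hpos (fun i => (hp i).le) hq hq₁

theorem sum_mul_escort_rpow_neg (hb : -1 < b) (hp : ∀ i, 0 < p i) :
    ∑ i, p i * (p i ^ (1 / (1 + b)) / ∑ j, p j ^ (1 / (1 + b))) ^ (-b) =
      (∑ i, p i ^ (1 / (1 + b))) ^ (1 + b) := by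
  have hb₁ : 0 < 1 + b := by linarith
  set S := ∑ j, p j ^ (1 / (1 + b))
  have hS : 0 ≤ S := sum_nonneg fun j _ => rpow_nonneg (hp j).le _
  have hexp : 1 + 1 / (1 + b) * -b = 1 / (1 + b) := by field_simp; ring
  have hterm : ∀ i, p i * (p i ^ (1 / (1 + b)) / S) ^ (-b) = S ^ b * p i ^ (1 / (1 + b)) :=
    fun i => by
    rw [div_rpow (rpow_nonneg (hp i).le _) hS, rpow_neg hS, div_inv_eq_mul,
      ← rpow_mul (hp i).le, ← mul_assoc, ← rpow_one_add' (hp i).le (by rw [hexp]; positivity),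
      hexp, mul_comm]
  rw [sum_congr rfl fun i _ => hterm i, ← mul_sum, rpow_one_add' hS (by linarith)]
  ring

end Kraft

theorem exp_average_min_is_renyi_general (n : ℕ) (hn : 1 ≤ n) (p : Fin n → ℝ)
    (hp : ∀ i, 0 < p i) (b : ℝ) (hb : -1 < b) (hb0 : b ≠ 0) :
    IsLeast
      {x : ℝ | ∃ l : Fin n → ℝ, (∑ i, (2 : ℝ) ^ (-(l i)) ≤ 1) ∧
        x = (1 / b) * Real.logb 2 (∑ i, p i * (2 : ℝ) ^ (b * l i))}
      ((1 / (1 - 1 / (1 + b))) * Real.logb 2 (∑ i, p i ^ (1 / (1 + b)))) := by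
  have : Nonempty (Fin n) := ⟨⟨0, hn⟩⟩
  have hb₁ : 0 < 1 + b := by linarith
  set S := ∑ i, p i ^ (1 / (1 + b))
  have hS : 0 < S := sum_pos (fun i _ => rpow_pos_of_pos (hp i) _) univ_nonempty
  have hq : ∀ i, (2 : ℝ) ^ (-(-logb 2 (p i ^ (1 / (1 + b)) / S))) =
      p i ^ (1 / (1 + b)) / S := fun i => by
    rw [neg_neg, rpow_logb two_pos one_lt_two.ne' (div_pos (rpow_pos_of_pos (hp i) _) hS)]
  have hcoef : 1 / (1 - 1 / (1 + b)) = (1 + b) / b := by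
    rw [one_sub_div hb₁.ne', add_sub_cancel_left, one_div_div]
  rw [hcoef]
  refine ⟨⟨fun i => -logb 2 (p i ^ (1 / (1 + b)) / S), ?_, ?_⟩, ?_⟩
  · rw [sum_congr rfl fun i _ => hq i, ← sum_div, div_self hS.ne']
  · rw [sum_congr rfl fun i _ => by rw [two_rpow_mul_eq_two_rpow_neg_rpow_neg, hq],
      sum_mul_escort_rpow_neg hb hp, logb_rpow_eq_mul_logb_of_pos hS]
    ring
  · rintro _ ⟨l, hK, rfl⟩
    simp only [two_rpow_mul_eq_two_rpow_neg_rpow_neg]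
    exact one_add_div_mul_logb_sum_rpow_le hb hb0 hp (fun i => by positivity) hK

theorem exp_average_min_is_renyi (n : ℕ) (hn : 1 ≤ n) (p : Fin n → ℝ)
    (hp : ∀ i, 0 < p i) (hsum : ∑ i, p i = 1) (b : ℝ) (hb : -1 < b) (hb0 : b ≠ 0) :
    IsLeast
      {x : ℝ | ∃ l : Fin n → ℝ, (∑ i, (2 : ℝ) ^ (-(l i)) ≤ 1) ∧
        x = (1 / b) * Real.logb 2 (∑ i, p i * (2 : ℝ) ^ (b * l i))}
      ((1 / (1 - 1 / (1 + b))) * Real.logb 2 (∑ i, p i ^ (1 / (1 + b)))) :=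
  exp_average_min_is_renyi_general n hn p hp b hb hb0
end

section
/- The real-valued lengths l_i† = -(1/(1+b))·log₂ p_i + log₂(Σ_j p_j^(1/(1+b))) achieve F_b(p, l†) = H_{1/(1+b)}(p), i.e., they attain the Rényi entropy lower bound for the β-exponential average. -/
open Real Finset

/-! With `α = 1 / (1 + b)` and `S = ∑ j, p j ^ α`, the ideal lengths satisfy
`b * l i = log₂ (p i ^ (α - 1) * S ^ b)`, so `∑ i, p i * 2 ^ (b * l i) = S * S ^ b = S ^ (1 + b)`.
Hence `F_b(p, l) = ((1 + b) / b) * log₂ S`, and `(1 + b) / b = 1 / (1 - α)`. -/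

lemma logb_rpow_eq_mul_logb_of_nonneg {a x y : ℝ} (hx : 0 ≤ x) (hy : y ≠ 0) :
    logb a (x ^ y) = y * logb a x := by
  rcases hx.eq_or_lt with rfl | hx
  · rw [zero_rpow hy, logb_zero, mul_zero]
  · exact logb_rpow_eq_mul_logb_of_pos hx

lemma mul_rpow_mul_ideal_length {a b x S : ℝ} (ha : 0 < a) (ha1 : a ≠ 1) (hb : 1 + b ≠ 0)
    (hx : 0 < x) (hS : 0 < S) :
    x * a ^ (b * (-(1 / (1 + b)) * logb a x + logb a S)) = x ^ (1 / (1 + b)) * S ^ b := by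
  have hexp : b * (-(1 / (1 + b)) * logb a x + logb a S)
      = logb a (x ^ (-(b / (1 + b))) * S ^ b) := by
    rw [logb_mul (rpow_pos_of_pos hx _).ne' (rpow_pos_of_pos hS _).ne',
      logb_rpow_eq_mul_logb_of_pos hx, logb_rpow_eq_mul_logb_of_pos hS]
    ring
  have hα : 1 + -(b / (1 + b)) = 1 / (1 + b) := by field_simp; ring
  rw [hexp, rpow_logb ha ha1 (by positivity), ← mul_assoc,
    ← rpow_one_add' hx.le (by rw [hα]; exact one_div_ne_zero hb), hα]

lemma sum_mul_rpow_mul_ideal_length {ι : Type*} [Fintype ι] {a b : ℝ} (ha : 0 < a) (ha1 : a ≠ 1)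
    (hb : 1 + b ≠ 0) (p : ι → ℝ) (hp : ∀ i, 0 < p i) :
    ∑ i, p i * a ^ (b * (-(1 / (1 + b)) * logb a (p i) + logb a (∑ j, p j ^ (1 / (1 + b)))))
      = (∑ j, p j ^ (1 / (1 + b))) ^ (1 + b) := by
  set S := ∑ j, p j ^ (1 / (1 + b))
  have hS : ∀ i, 0 < S := fun i =>
    (rpow_pos_of_pos (hp i) _).trans_le
      (single_le_sum (fun j _ => (rpow_pos_of_pos (hp j) _).le) (mem_univ i))
  rw [sum_congr rfl fun i _ => mul_rpow_mul_ideal_length ha ha1 hb (hp i) (hS i), ← sum_mul,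
    rpow_one_add' (sum_nonneg fun j _ => (rpow_pos_of_pos (hp j) _).le) hb]

theorem ideal_lengths_achieve_renyi_general (n : ℕ) (p : Fin n → ℝ)
    (hp : ∀ i, 0 < p i) (b : ℝ) (hb : -1 < b)
    (l : Fin n → ℝ)
    (hl : ∀ i, l i = -(1 / (1 + b)) * Real.logb 2 (p i)
        + Real.logb 2 (∑ j, p j ^ (1 / (1 + b)))) :
    (1 / b) * Real.logb 2 (∑ i, p i * (2 : ℝ) ^ (b * l i))
      = (1 / (1 - 1 / (1 + b))) * Real.logb 2 (∑ i, p i ^ (1 / (1 + b))) := by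
  have hb1 : 1 + b ≠ 0 := by linarith
  simp only [hl]
  rw [sum_mul_rpow_mul_ideal_length two_pos (by norm_num) hb1 p hp,
    logb_rpow_eq_mul_logb_of_nonneg (sum_nonneg fun j _ => (rpow_pos_of_pos (hp j) _).le) hb1,
    one_sub_div hb1, add_sub_cancel_left, one_div_div]
  ring

theorem ideal_lengths_achieve_renyi (n : ℕ) (hn : 1 ≤ n) (p : Fin n → ℝ)
    (hp : ∀ i, 0 < p i) (hsum : ∑ i, p i = 1) (b : ℝ) (hb : -1 < b) (hb0 : b ≠ 0)
    (l : Fin n → ℝ)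
    (hl : ∀ i, l i = -(1 / (1 + b)) * Real.logb 2 (p i)
        + Real.logb 2 (∑ j, p j ^ (1 / (1 + b)))) :
    (1 / b) * Real.logb 2 (∑ i, p i * (2 : ℝ) ^ (b * l i))
      = (1 / (1 - 1 / (1 + b))) * Real.logb 2 (∑ i, p i ^ (1 / (1 + b))) :=
  ideal_lengths_achieve_renyi_general n p hp b hb l hl
end

section
/- For any probability mass function p with p_i > 0 for all i and any real b ≠ 0 with b > -1, and any real-valued lengths l satisfying the Kraft inequality Σ 2^(-l_i) ≤ 1, one has F_b(p,l) ≥ H_{1/(1+b)}(p), i.e., (1/b)·log₂(Σ_i p_i·2^(b·l_i)) ≥ (1+b)/b · log₂(Σ_i p_i^(1/(1+b))). -/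
/-!
Hölder's inequality, with exponents chosen so that the weights `2 ^ (-l i)` enter only
through the Kraft sum, gives `(∑ p i ^ (1 / (1 + b))) ^ (1 + b) ≤ ∑ p i * 2 ^ (b * l i)` for
`b > 0` and the reverse inequality for `-1 < b < 0`. Taking `logb 2` and dividing by `b`, whose
sign matches the direction of the inequality, gives the claim in both cases.
-/

open Real Finset

section Holder

variable {ι : Type*} (s : Finset ι) {p q : ι → ℝ} {b : ℝ}

theorem rpow_sum_rpow_le_sum_mul_rpow_mul_rpow_sum (hp : ∀ i ∈ s, 0 ≤ p i)
    (hq : ∀ i ∈ s, 0 < q i) (hb : 0 < b) :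
    (∑ i ∈ s, p i ^ (1 / (1 + b))) ^ (1 + b)
      ≤ (∑ i ∈ s, p i * q i ^ (-b)) * (∑ i ∈ s, q i) ^ b := by
  have h1b : 0 < 1 + b := by linarith
  have htriple : HolderTriple 1 (1 / b) (1 / (1 + b)) :=
    ⟨by simp [add_comm], one_pos, by positivity⟩
  have hholder := Lr_rpow_le_Lp_mul_Lq_of_nonneg s htriple
    (f := fun i => p i * q i ^ (-b)) (g := fun i => q i ^ b)
    (fun i hi => mul_nonneg (hp i hi) (rpow_nonneg (hq i hi).le _))
    (fun i hi => rpow_nonneg (hq i hi).le _)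
  have hprod : ∀ i ∈ s, (p i * q i ^ (-b) * q i ^ b) ^ (1 / (1 + b)) = p i ^ (1 / (1 + b)) :=
    fun i hi => by rw [mul_assoc, ← rpow_add (hq i hi), neg_add_cancel, rpow_zero, mul_one]
  have hpow : ∀ i ∈ s, (q i ^ b) ^ (1 / b) = q i := fun i hi => by
    rw [← rpow_mul (hq i hi).le, mul_one_div_cancel hb.ne', rpow_one]
  simp only [rpow_one, div_one] at hholder
  rw [sum_congr rfl hprod, sum_congr rfl hpow] at hholder
  have hS : 0 ≤ ∑ i ∈ s, p i * q i ^ (-b) :=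
    sum_nonneg fun i hi => mul_nonneg (hp i hi) (rpow_nonneg (hq i hi).le _)
  have hK : 0 ≤ ∑ i ∈ s, q i := sum_nonneg fun i hi => (hq i hi).le
  calc (∑ i ∈ s, p i ^ (1 / (1 + b))) ^ (1 + b)
      ≤ ((∑ i ∈ s, p i * q i ^ (-b)) ^ (1 / (1 + b))
          * (∑ i ∈ s, q i) ^ (1 / (1 + b) / (1 / b))) ^ (1 + b) :=
        rpow_le_rpow (sum_nonneg fun i hi => rpow_nonneg (hp i hi) _) hholder h1b.le
    _ = (∑ i ∈ s, p i * q i ^ (-b)) * (∑ i ∈ s, q i) ^ b := by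
        rw [mul_rpow (by positivity) (by positivity), ← rpow_mul hS, ← rpow_mul hK]
        field_simp
        rw [rpow_one, mul_comm]

theorem sum_mul_rpow_le_rpow_sum_rpow_mul_rpow_sum (hp : ∀ i ∈ s, 0 ≤ p i)
    (hq : ∀ i ∈ s, 0 ≤ q i) (hb : -1 < b) (hb0 : b < 0) :
    ∑ i ∈ s, p i * q i ^ (-b)
      ≤ (∑ i ∈ s, p i ^ (1 / (1 + b))) ^ (1 + b) * (∑ i ∈ s, q i) ^ (-b) := by
  have h1b : 0 < 1 + b := by linarith
  have hconj : HolderConjugate (1 / (1 + b)) (-1 / b) :=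
    ⟨by simp [div_neg], by positivity, div_pos_of_neg_of_neg (by norm_num) hb0⟩
  have hpow : ∀ i ∈ s, (q i ^ (-b)) ^ (-1 / b) = q i := fun i hi => by
    rw [← rpow_mul (hq i hi), show -b * (-1 / b) = 1 by field_simp [hb0.ne], rpow_one]
  have hholder := inner_le_Lp_mul_Lq_of_nonneg s hconj hp
    (g := fun i => q i ^ (-b)) (fun i hi => rpow_nonneg (hq i hi) _)
  rwa [sum_congr rfl hpow, one_div_one_div, one_div_div, div_neg, div_one] at hholder

end Holder

theorem exp_average_ge_renyi_general (n : ℕ) (p : Fin n → ℝ)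
    (hp : ∀ i, 0 < p i) (b : ℝ) (hb : -1 < b) (hb0 : b ≠ 0)
    (l : Fin n → ℝ) (hkraft : ∑ i, (2 : ℝ) ^ (-(l i)) ≤ 1) :
    (1 / b) * Real.logb 2 (∑ i, p i * (2 : ℝ) ^ (b * l i))
      ≥ ((1 + b) / b) * Real.logb 2 (∑ i, p i ^ (1 / (1 + b))) := by
  rcases isEmpty_or_nonempty (Fin n) with _ | _
  · simp
  have hp' : ∀ i ∈ univ, 0 ≤ p i := fun i _ => (hp i).le
  have hq : ∀ i ∈ univ, 0 < (2 : ℝ) ^ (-(l i)) := fun i _ => by positivity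
  have hq0 : ∀ i ∈ univ, 0 ≤ (2 : ℝ) ^ (-(l i)) := fun i hi => (hq i hi).le
  have hK : 0 ≤ ∑ i, (2 : ℝ) ^ (-(l i)) := by positivity
  have hweights : ∑ i, p i * (2 : ℝ) ^ (b * l i) = ∑ i, p i * ((2 : ℝ) ^ (-(l i))) ^ (-b) :=
    sum_congr rfl fun i _ => by rw [← rpow_mul zero_le_two, neg_mul_neg, mul_comm (l i)]
  have hSpos : 0 < ∑ i, p i * ((2 : ℝ) ^ (-(l i))) ^ (-b) :=
    sum_pos (fun i _ => mul_pos (hp i) (rpow_pos_of_pos (hq i (mem_univ i)) _)) univ_nonempty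
  have hTpos : 0 < ∑ i, p i ^ (1 / (1 + b)) :=
    sum_pos (fun i _ => rpow_pos_of_pos (hp i) _) univ_nonempty
  rw [hweights, ge_iff_le, ← mul_div_right_comm, one_div_mul_eq_div,
    ← logb_rpow_eq_mul_logb_of_pos hTpos]
  rcases hb0.lt_or_gt with hneg | hpos
  · refine div_le_div_of_nonpos_of_le hneg.le (logb_le_logb_of_le one_lt_two hSpos ?_)
    exact (sum_mul_rpow_le_rpow_sum_rpow_mul_rpow_sum univ hp' hq0 hb hneg).trans
      (mul_le_of_le_one_right (by positivity) (rpow_le_one hK hkraft (by linarith)))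
  · refine div_le_div_of_nonneg_right (logb_le_logb_of_le one_lt_two (by positivity) ?_) hpos.le
    exact (rpow_sum_rpow_le_sum_mul_rpow_mul_rpow_sum univ hp' hq hpos).trans
      (mul_le_of_le_one_right hSpos.le (rpow_le_one hK hkraft hpos.le))

theorem exp_average_ge_renyi (n : ℕ) (hn : 1 ≤ n) (p : Fin n → ℝ)
    (hp : ∀ i, 0 < p i) (hsum : ∑ i, p i = 1) (b : ℝ) (hb : -1 < b) (hb0 : b ≠ 0)
    (l : Fin n → ℝ) (hkraft : ∑ i, (2 : ℝ) ^ (-(l i)) ≤ 1) :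
    (1 / b) * Real.logb 2 (∑ i, p i * (2 : ℝ) ^ (b * l i))
      ≥ ((1 + b) / b) * Real.logb 2 (∑ i, p i ^ (1 / (1 + b))) :=
  exp_average_ge_renyi_general n p hp b hb hb0 l hkraft
end

section
/- As d → +∞, for a fixed length vector l, (1/d)·log₂(Σ_i p_i·2^(d·r_b(i))) = max_i r_b(i) + (1/d)·log₂(P[r_b(X) = max_j r_b(j)]) + O(1/(d·2^(d·δ))) for some δ > 0, where P is the probability under p of the set of indices attaining the maximum pointwise b-redundancy. In particular, the limit as d → +∞ equals max_i r_b(i). -/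
open Real Finset Filter Asymptotics Topology

/-!
Factoring out `2 ^ (d * M)`, the sum equals `2 ^ (d * M) * (P + E d)`, where `E d` collects the
non-maximal terms; with `δ` the gap between `M` and the next largest value of `r`, `E d` is
`O(2 ^ (-d δ))`. Hence `(1 / d) * logb 2` of the sum is `M + (1 / d) * logb 2 P` up to
`(1 / d) * logb 2 (1 + E d / P) ≤ E d / (d * P * log 2)`.
-/

theorem Real.logb_add_sub_logb_le {b x y : ℝ} (hb : 1 < b) (hx : 0 < x) (hy : 0 ≤ y) :
    logb b (x + y) - logb b x ≤ y / (x * log b) := by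
  have hlog : log ((x + y) / x) ≤ y / x :=
    calc log ((x + y) / x) ≤ (x + y) / x - 1 := log_le_sub_one_of_pos (by positivity)
      _ = y / x := by field_simp; ring
  rw [← logb_div (by positivity) hx.ne', logb, ← div_div]
  exact div_le_div_of_nonneg_right hlog (log_pos hb).le

theorem exists_pos_forall_lt_imp_le_sub {ι : Type*} [Finite ι] (r : ι → ℝ) (M : ℝ) :
    ∃ δ > 0, ∀ i, r i < M → r i ≤ M - δ := by
  have hsmall : ∀ᶠ δ in 𝓝[>] (0 : ℝ), ∀ i, r i < M → δ ≤ M - r i :=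
    eventually_all.2 fun i => by
      by_cases hi : r i < M
      · filter_upwards [nhdsWithin_le_nhds (eventually_le_nhds (sub_pos.2 hi))] with δ hδ
        exact fun _ => hδ
      · exact .of_forall fun _ h => absurd h hi
  obtain ⟨δ, hδ, hpos⟩ := (hsmall.and self_mem_nhdsWithin).exists
  exact ⟨δ, hpos, fun i hi => by linarith [hδ i hi]⟩

theorem tendsto_one_div_mul_two_rpow_atTop {δ : ℝ} (hδ : 0 < δ) :
    Tendsto (fun d : ℝ => 1 / (d * (2 : ℝ) ^ (d * δ))) atTop (𝓝 0) := by
  simp only [one_div]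
  refine (tendsto_id.atTop_mul_atTop₀ ?_).inv_tendsto_atTop
  exact (tendsto_rpow_atTop_of_base_gt_one 2 one_lt_two).comp (tendsto_id.atTop_mul_const hδ)

section MaxOfWeightedExponentialSum

variable {ι : Type*} [Fintype ι] {w r : ι → ℝ} {M : ℝ}

theorem sum_mul_two_rpow_eq (w r : ι → ℝ) (M d : ℝ) :
    ∑ i, w i * (2 : ℝ) ^ (d * r i) = (2 : ℝ) ^ (d * M) *
      (∑ i ∈ univ.filter (fun i => r i = M), w i
        + ∑ i ∈ univ.filter (fun i => r i ≠ M), w i * (2 : ℝ) ^ (d * (r i - M))) := by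
  rw [mul_add, mul_sum, mul_sum, ← sum_filter_add_sum_filter_not univ (fun i => r i = M)]
  congr 1
  · refine sum_congr rfl fun i hi => ?_
    rw [(mem_filter.1 hi).2, mul_comm]
  · refine sum_congr rfl fun i _ => ?_
    rw [mul_left_comm, ← rpow_add two_pos]
    ring_nf

theorem sum_filter_ne_mul_two_rpow_le (hw : ∀ i, 0 ≤ w i) (hr : ∀ i, r i ≤ M) {δ : ℝ}
    (hδ : ∀ i, r i < M → r i ≤ M - δ) {d : ℝ} (hd : 0 ≤ d) :
    ∑ i ∈ univ.filter (fun i => r i ≠ M), w i * (2 : ℝ) ^ (d * (r i - M))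
      ≤ (∑ i, w i) * (2 : ℝ) ^ (-(d * δ)) := by
  rw [sum_mul]
  refine (sum_le_sum fun i hi => ?_).trans
    (sum_le_sum_of_subset_of_nonneg (filter_subset _ _) fun i _ _ => ?_)
  · have hgap := hδ i ((hr i).lt_of_ne (mem_filter.1 hi).2)
    gcongr
    · exact hw i
    · exact one_le_two
    · nlinarith
  · exact mul_nonneg (hw i) (rpow_nonneg zero_le_two _)

theorem isBigO_logb_sum_mul_two_rpow_sub (hw : ∀ i, 0 < w i) (hM : IsGreatest (Set.range r) M) :
    ∃ δ > (0 : ℝ), (fun d : ℝ => (1 / d) * logb 2 (∑ i, w i * (2 : ℝ) ^ (d * r i))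
        - (M + (1 / d) * logb 2 (∑ i ∈ univ.filter (fun i => r i = M), w i)))
      =O[atTop] (fun d : ℝ => 1 / (d * (2 : ℝ) ^ (d * δ))) := by
  obtain ⟨⟨i₀, hi₀⟩, hupper⟩ := hM
  have hr : ∀ i, r i ≤ M := fun i => hupper ⟨i, rfl⟩
  set P := ∑ i ∈ univ.filter (fun i => r i = M), w i
  set E := fun d : ℝ => ∑ i ∈ univ.filter (fun i => r i ≠ M), w i * (2 : ℝ) ^ (d * (r i - M))
  have hP : 0 < P := sum_pos (fun i _ => hw i) ⟨i₀, by simp [hi₀]⟩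
  have hE : ∀ d, 0 ≤ E d := fun d =>
    sum_nonneg fun i _ => mul_nonneg (hw i).le (rpow_nonneg zero_le_two _)
  obtain ⟨δ, hδ, hgap⟩ := exists_pos_forall_lt_imp_le_sub r M
  refine ⟨δ, hδ, IsBigO.of_bound ((∑ i, w i) / (P * log 2)) ?_⟩
  filter_upwards [eventually_gt_atTop 0] with d hd
  have herr : (1 / d) * logb 2 (∑ i, w i * (2 : ℝ) ^ (d * r i)) - (M + (1 / d) * logb 2 P)
      = (1 / d) * (logb 2 (P + E d) - logb 2 P) := by
    rw [sum_mul_two_rpow_eq w r M d, logb_mul (by positivity) (by linarith [hE d]),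
      logb_rpow two_pos (by norm_num)]
    field_simp
    ring
  have hlog_nonneg : 0 ≤ logb 2 (P + E d) - logb 2 P :=
    sub_nonneg.2 (logb_le_logb_of_le one_lt_two hP (le_add_of_nonneg_right (hE d)))
  rw [herr, norm_of_nonneg (by positivity), norm_of_nonneg (by positivity)]
  calc (1 / d) * (logb 2 (P + E d) - logb 2 P) ≤ (1 / d) * (E d / (P * log 2)) := by
        gcongr
        exact logb_add_sub_logb_le one_lt_two hP (hE d)
    _ ≤ (1 / d) * ((∑ i, w i) * (2 : ℝ) ^ (-(d * δ)) / (P * log 2)) := by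
        gcongr
        exact sum_filter_ne_mul_two_rpow_le (fun i => (hw i).le) hr hgap hd.le
    _ = (∑ i, w i) / (P * log 2) * (1 / (d * (2 : ℝ) ^ (d * δ))) := by
        rw [rpow_neg zero_le_two]
        field_simp

theorem tendsto_logb_sum_mul_two_rpow_div (hw : ∀ i, 0 < w i) (hM : IsGreatest (Set.range r) M) :
    Tendsto (fun d : ℝ => (1 / d) * logb 2 (∑ i, w i * (2 : ℝ) ^ (d * r i))) atTop (𝓝 M) := by
  obtain ⟨δ, hδ, hO⟩ := isBigO_logb_sum_mul_two_rpow_sub hw hM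
  set P := ∑ i ∈ univ.filter (fun i => r i = M), w i
  have hlogP : Tendsto (fun d : ℝ => (1 / d) * logb 2 P) atTop (𝓝 0) := by
    simpa using tendsto_inv_atTop_zero.mul_const (logb 2 P)
  convert (hO.trans_tendsto (tendsto_one_div_mul_two_rpow_atTop hδ)).add
    ((tendsto_const_nhds (x := M)).add hlogP) using 1
  · ext d
    ring
  · simp

end MaxOfWeightedExponentialSum

theorem exp_average_expansion_at_infinity_general (n : ℕ) (hn : 1 ≤ n) (p : Fin n → ℝ)
    (hp : ∀ i, 0 < p i) (r : Fin n → ℝ)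
    (M : ℝ) (hM : M = (Finset.univ.sup' (Finset.univ_nonempty_iff.2 ⟨⟨0, hn⟩⟩) r))
    (P : ℝ) (hP : P = ∑ i ∈ Finset.univ.filter (fun i => r i = M), p i) :
    (∃ δ > (0 : ℝ),
      (fun d : ℝ =>
          (1 / d) * Real.logb 2 (∑ i, p i * (2 : ℝ) ^ (d * r i))
            - (M + (1 / d) * Real.logb 2 P))
        =O[Filter.atTop] (fun d : ℝ => 1 / (d * (2 : ℝ) ^ (d * δ)))) ∧
    Filter.Tendsto
      (fun d : ℝ => (1 / d) * Real.logb 2 (∑ i, p i * (2 : ℝ) ^ (d * r i)))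
      Filter.atTop (nhds M) := by
  have hmax : IsGreatest (Set.range r) M := by
    obtain ⟨i, -, hi⟩ := exists_mem_eq_sup' (univ_nonempty_iff.2 ⟨⟨0, hn⟩⟩) r
    refine ⟨⟨i, hM ▸ hi.symm⟩, ?_⟩
    rintro _ ⟨j, rfl⟩
    exact hM ▸ le_sup' r (mem_univ j)
  subst hP
  exact ⟨isBigO_logb_sum_mul_two_rpow_sub hp hmax, tendsto_logb_sum_mul_two_rpow_div hp hmax⟩

theorem exp_average_expansion_at_infinity (n : ℕ) (hn : 1 ≤ n) (p : Fin n → ℝ)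
    (hp : ∀ i, 0 < p i) (hsum : ∑ i, p i = 1) (b : ℝ) (hb : -1 < b)
    (l : Fin n → ℝ) (r : Fin n → ℝ)
    (hr : ∀ i, r i = l i - (-(1 / (1 + b)) * Real.logb 2 (p i)
        + Real.logb 2 (∑ j, p j ^ (1 / (1 + b)))))
    (M : ℝ) (hM : M = (Finset.univ.sup' (Finset.univ_nonempty_iff.2 ⟨⟨0, hn⟩⟩) r))
    (P : ℝ) (hP : P = ∑ i ∈ Finset.univ.filter (fun i => r i = M), p i) :
    (∃ δ > (0 : ℝ),
      (fun d : ℝ =>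
          (1 / d) * Real.logb 2 (∑ i, p i * (2 : ℝ) ^ (d * r i))
            - (M + (1 / d) * Real.logb 2 P))
        =O[Filter.atTop] (fun d : ℝ => 1 / (d * (2 : ℝ) ^ (d * δ)))) ∧
    Filter.Tendsto
      (fun d : ℝ => (1 / d) * Real.logb 2 (∑ i, p i * (2 : ℝ) ^ (d * r i)))
      Filter.atTop (nhds M) :=
  exp_average_expansion_at_infinity_general n hn p hp r M hM P hP
end

section
/- Shannon-type bounds for DABR: for b > -1, d > -1, d ≠ 0, b+d ≥ -1, the optimal integer-length d-average b-redundancy satisfies 0 ≤ R_{b,d}(p, l*) − α·b·(H_ω(p) − H_α(p)) < 1, where α = 1/(1+b), ω = (1+b+d)/((1+b)(1+d)), H_s(p) = (1/(1-s))·log₂(Σ_i p_i^s), R_{b,d}(p,l) = (1/d)·log₂(Σ_i p_i·2^(d(l_i − l_i†))), l_i† = -(1/(1+b))·log₂ p_i + log₂(Σ_j p_j^(1/(1+b))), and l* minimizes R_{b,d}(p,·) over integer length vectors satisfying the Kraft inequality. The upper bound is witnessed by the rounded lengths ⌈l_i‡⌉. -/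
/-!
Let `q = p^ω / ∑ p^ω` be the escort distribution and `l‡ = -log₂ q`. Because
`ω (1 + d) = 1 + α d`, the weights `p_i 2^(-d l†_i)` are proportional to `q_i 2^(-d l‡_i)`, so
`R(l) - α b (H_ω - H_α)` is exactly Campbell's exponential mean `(1/d) log₂ ∑ q_i 2^(d (l_i - l‡_i))`.
The Kraft inequality reads `∑ q_i 2^(-(l_i - l‡_i)) ≤ 1`; Jensen's inequality for `2^x` (when `d > 0`)
or concavity of `t ↦ t^(-d)` (when `-1 ≤ d < 0`) turns it into nonnegativity of that mean.
The Shannon-type lengths `⌈l‡⌉` satisfy Kraft and `l_i - l‡_i < 1`, so their mean is below `1`,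
and optimality of `l*` transfers this bound.
-/

open Real Finset

section
variable {ι : Type*} [Fintype ι]

noncomputable def expMean (d : ℝ) (q x : ι → ℝ) : ℝ :=
  (1 / d) * logb 2 (∑ i, q i * (2 : ℝ) ^ (d * x i))

noncomputable def escort (s : ℝ) (p : ι → ℝ) (i : ι) : ℝ := p i ^ s / ∑ j, p j ^ s

variable {q f x : ι → ℝ} {c d : ℝ}

lemma sum_mul_lt_of_forall_lt (hq : ∀ i, 0 ≤ q i) (hq1 : ∑ i, q i = 1) (hf : ∀ i, f i < c) :
    ∑ i, q i * f i < c := by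
  obtain ⟨j, -, hj⟩ := exists_lt_of_sum_lt (s := univ) (f := fun _ ↦ (0 : ℝ)) (g := q)
    (by simp [hq1])
  calc ∑ i, q i * f i < ∑ i, q i * c :=
        sum_lt_sum (fun i _ ↦ mul_le_mul_of_nonneg_left (hf i).le (hq i))
          ⟨j, mem_univ j, mul_lt_mul_of_pos_left (hf j) hj⟩
    _ = c := by rw [← sum_mul, hq1, one_mul]

lemma lt_sum_mul_of_forall_lt (hq : ∀ i, 0 ≤ q i) (hq1 : ∑ i, q i = 1) (hf : ∀ i, c < f i) :
    c < ∑ i, q i * f i := by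
  simpa [sum_neg_distrib] using
    sum_mul_lt_of_forall_lt hq hq1 (f := fun i ↦ -f i) fun i ↦ neg_lt_neg (hf i)

lemma expMean_lt_of_forall_lt (hq : ∀ i, 0 ≤ q i) (hq1 : ∑ i, q i = 1) (hd : d ≠ 0)
    (hx : ∀ i, x i < c) : expMean d q x < c := by
  rw [expMean, one_div_mul_eq_div]
  rcases hd.lt_or_gt with hd | hd
  · have hlt : (2 : ℝ) ^ (d * c) < ∑ i, q i * (2 : ℝ) ^ (d * x i) :=
      lt_sum_mul_of_forall_lt hq hq1 fun i ↦
        rpow_lt_rpow_of_exponent_lt one_lt_two (by nlinarith [hx i])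
    have := logb_lt_logb one_lt_two (by positivity) hlt
    rw [logb_rpow two_pos (by norm_num)] at this
    rw [div_lt_iff_of_neg hd]
    linarith
  · have hlt : ∑ i, q i * (2 : ℝ) ^ (d * x i) < (2 : ℝ) ^ (d * c) :=
      sum_mul_lt_of_forall_lt hq hq1 fun i ↦
        rpow_lt_rpow_of_exponent_lt one_lt_two (by nlinarith [hx i])
    have := logb_lt_logb one_lt_two
      (lt_sum_mul_of_forall_lt hq hq1 fun i ↦ rpow_pos_of_pos two_pos _) hlt
    rw [logb_rpow two_pos (by norm_num)] at this
    rw [div_lt_iff₀ hd]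
    linarith

lemma expMean_nonneg_of_kraft (hq : ∀ i, 0 ≤ q i) (hq1 : ∑ i, q i = 1) (hd : -1 ≤ d)
    (hd0 : d ≠ 0) (hkraft : ∑ i, q i * (2 : ℝ) ^ (-x i) ≤ 1) : 0 ≤ expMean d q x := by
  rcases hd0.lt_or_gt with hneg | hpos
  · have hS : ∑ i, q i * (2 : ℝ) ^ (d * x i) ≤ 1 := calc
      ∑ i, q i * (2 : ℝ) ^ (d * x i) = ∑ i, q i * ((2 : ℝ) ^ (-x i)) ^ (-d) := by
          congr! 2 with i
          rw [← rpow_mul zero_le_two]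
          ring_nf
      _ ≤ (∑ i, q i * (2 : ℝ) ^ (-x i)) ^ (-d) :=
          (concaveOn_rpow (by linarith) (by linarith)).le_map_sum (fun i _ ↦ hq i) hq1
            fun i _ ↦ Set.mem_Ici.2 (by positivity)
      _ ≤ 1 := rpow_le_one (sum_nonneg fun i _ ↦ mul_nonneg (hq i) (by positivity)) hkraft
          (by linarith)
    exact mul_nonneg_of_nonpos_of_nonpos (by rw [one_div]; exact inv_nonpos.2 hneg.le)
      (logb_nonpos one_lt_two (sum_nonneg fun i _ ↦ mul_nonneg (hq i) (by positivity)) hS)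
  · have jensen (y : ι → ℝ) : (2 : ℝ) ^ (∑ i, q i * y i) ≤ ∑ i, q i * (2 : ℝ) ^ y i :=
      (convexOn_rpow_left two_pos).map_sum_le (fun i _ ↦ hq i) hq1 fun i _ ↦ Set.mem_univ _
    have hmean : 0 ≤ ∑ i, q i * x i := by
      have h := (jensen fun i ↦ -x i).trans hkraft
      rw [← rpow_zero 2, rpow_le_rpow_left_iff one_lt_two] at h
      simpa [mul_neg, sum_neg_distrib] using h
    have hS : 1 ≤ ∑ i, q i * (2 : ℝ) ^ (d * x i) := calc
      1 ≤ (2 : ℝ) ^ (∑ i, q i * (d * x i)) := one_le_rpow one_le_two <| by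
          simp_rw [mul_left_comm _ d, ← mul_sum]; positivity
      _ ≤ _ := jensen _
    exact mul_nonneg (by positivity) (logb_nonneg one_lt_two hS)

variable {p : ι → ℝ}

lemma escort_pos (hp : ∀ i, 0 < p i) (s : ℝ) (i : ι) : 0 < escort s p i :=
  div_pos (rpow_pos_of_pos (hp i) s) (sum_pos (fun j _ ↦ rpow_pos_of_pos (hp j) s) ⟨i, mem_univ i⟩)

lemma sum_escort [Nonempty ι] (hp : ∀ i, 0 < p i) (s : ℝ) : ∑ i, escort s p i = 1 := by
  simp only [escort]
  rw [← sum_div, div_self (sum_pos (fun j _ ↦ rpow_pos_of_pos (hp j) s) univ_nonempty).ne']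

lemma logb_escort {s : ℝ} (hp : ∀ i, 0 < p i) (i : ι) :
    logb 2 (escort s p i) = s * logb 2 (p i) - logb 2 (∑ j, p j ^ s) := by
  rw [escort, logb_div (rpow_pos_of_pos (hp i) s).ne'
    (sum_pos (fun j _ ↦ rpow_pos_of_pos (hp j) s) ⟨i, mem_univ i⟩).ne',
    logb_rpow_eq_mul_logb_of_pos (hp i)]

lemma sum_mul_two_rpow_neg_add_logb (hq : ∀ i, 0 < q i) (l : ι → ℝ) :
    ∑ i, q i * (2 : ℝ) ^ (-(l i + logb 2 (q i))) = ∑ i, (2 : ℝ) ^ (-l i) := by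
  refine sum_congr rfl fun i _ ↦ ?_
  rw [neg_add, rpow_add two_pos, rpow_neg zero_le_two (logb 2 (q i)),
    rpow_logb two_pos (by norm_num) (hq i)]
  field_simp [(hq i).ne']

lemma sum_two_rpow_neg_ceil_neg_logb_le (hq : ∀ i, 0 < q i) :
    ∑ i, (2 : ℝ) ^ (-(⌈-logb 2 (q i)⌉ : ℝ)) ≤ ∑ i, q i := by
  refine sum_le_sum fun i _ ↦ ?_
  calc (2 : ℝ) ^ (-(⌈-logb 2 (q i)⌉ : ℝ)) ≤ (2 : ℝ) ^ logb 2 (q i) :=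
        rpow_le_rpow_of_exponent_le one_le_two (by linarith [Int.le_ceil (-logb 2 (q i))])
    _ = q i := rpow_logb two_pos (by norm_num) (hq i)

lemma two_rpow_mul_add_logb {y : ℝ} (hy : 0 < y) (d t : ℝ) :
    (2 : ℝ) ^ (d * (t + logb 2 y)) = (2 : ℝ) ^ (d * t) * y ^ d := by
  rw [mul_add, rpow_add two_pos, mul_comm d (logb 2 y), rpow_mul zero_le_two (logb 2 y),
    rpow_logb two_pos (by norm_num) hy]

lemma mul_escort_rpow {α ω : ℝ} (hp : ∀ i, 0 < p i) (hαω : ω * (1 + d) = 1 + α * d) (i : ι) :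
    p i * escort α p i ^ d
      = (∑ j, p j ^ ω) ^ (1 + d) / (∑ j, p j ^ α) ^ d * escort ω p i ^ (1 + d) := by
  have hA : 0 < ∑ j, p j ^ ω := sum_pos (fun j _ ↦ rpow_pos_of_pos (hp j) ω) ⟨i, mem_univ i⟩
  have hB : 0 < ∑ j, p j ^ α := sum_pos (fun j _ ↦ rpow_pos_of_pos (hp j) α) ⟨i, mem_univ i⟩
  have hpow : p i ^ (ω * (1 + d)) = p i * p i ^ (α * d) := by
    rw [hαω, rpow_add (hp i), rpow_one]
  rw [escort, escort, div_rpow (rpow_pos_of_pos (hp i) _).le hA.le,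
    div_rpow (rpow_pos_of_pos (hp i) _).le hB.le, ← rpow_mul (hp i).le,
    ← rpow_mul (hp i).le, hpow]
  have : 0 < (∑ j, p j ^ ω) ^ (1 + d) := rpow_pos_of_pos hA _
  have : 0 < (∑ j, p j ^ α) ^ d := rpow_pos_of_pos hB _
  field_simp

lemma expMean_add_logb_escort [Nonempty ι] {α ω : ℝ} (hp : ∀ i, 0 < p i) (hd : d ≠ 0)
    (hαω : ω * (1 + d) = 1 + α * d) (l : ι → ℝ) :
    expMean d p (fun i ↦ l i + logb 2 (escort α p i))
      = (1 + d) / d * logb 2 (∑ i, p i ^ ω) - logb 2 (∑ i, p i ^ α)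
        + expMean d (escort ω p) (fun i ↦ l i + logb 2 (escort ω p i)) := by
  have hA : 0 < ∑ j, p j ^ ω := sum_pos (fun j _ ↦ rpow_pos_of_pos (hp j) ω) univ_nonempty
  have hB : 0 < ∑ j, p j ^ α := sum_pos (fun j _ ↦ rpow_pos_of_pos (hp j) α) univ_nonempty
  set S := ∑ i, escort ω p i * (2 : ℝ) ^ (d * (l i + logb 2 (escort ω p i)))
  have hS : 0 < S := sum_pos (fun i _ ↦ mul_pos (escort_pos hp ω i) (by positivity)) univ_nonempty
  have hsum : ∑ i, p i * (2 : ℝ) ^ (d * (l i + logb 2 (escort α p i)))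
      = (∑ j, p j ^ ω) ^ (1 + d) / (∑ j, p j ^ α) ^ d * S := by
    rw [mul_sum]
    refine sum_congr rfl fun i _ ↦ ?_
    rw [two_rpow_mul_add_logb (escort_pos hp α i), two_rpow_mul_add_logb (escort_pos hp ω i),
      mul_left_comm, mul_escort_rpow hp hαω, rpow_add (escort_pos hp ω i), rpow_one]
    ring
  rw [expMean, expMean, hsum, logb_mul (by positivity) hS.ne',
    logb_div (by positivity) (by positivity), logb_rpow_eq_mul_logb_of_pos hA,
    logb_rpow_eq_mul_logb_of_pos hB]
  field_simp
  ring

end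

lemma dabr_exponents_relation {b d : ℝ} (h1b : 1 + b ≠ 0) (h1d : 1 + d ≠ 0) :
    (1 + b + d) / ((1 + b) * (1 + d)) * (1 + d) = 1 + 1 / (1 + b) * d := by
  field_simp

lemma dabr_entropy_gap_coeff {b d : ℝ} (h1b : 1 + b ≠ 0) (h1d : 1 + d ≠ 0) (hb0 : b ≠ 0)
    (hd0 : d ≠ 0) (A B : ℝ) :
    (1 + d) / d * A - B = 1 / (1 + b) * b
      * (1 / (1 - (1 + b + d) / ((1 + b) * (1 + d))) * A - 1 / (1 - 1 / (1 + b)) * B) := by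
  have hω1 : 1 - (1 + b + d) / ((1 + b) * (1 + d)) = b * d / ((1 + b) * (1 + d)) := by
    field_simp
    ring
  have hα1 : 1 - 1 / (1 + b) = b / (1 + b) := by
    field_simp
    ring
  rw [hω1, hα1]
  field_simp

theorem dabr_shannon_bounds_general (n : ℕ) (hn : 1 ≤ n) (p : Fin n → ℝ)
    (hp : ∀ i, 0 < p i)
    (b d : ℝ) (hb : -1 < b) (hd : -1 < d) (hd0 : d ≠ 0) (hb0 : b ≠ 0)
    (α ω : ℝ) (hα : α = 1 / (1 + b)) (hω : ω = (1 + b + d) / ((1 + b) * (1 + d)))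
    (ldag : Fin n → ℝ)
    (hldag : ∀ i, ldag i = -(1 / (1 + b)) * Real.logb 2 (p i)
        + Real.logb 2 (∑ j, p j ^ (1 / (1 + b))))
    (R : (Fin n → ℤ) → ℝ)
    (hR : ∀ l, R l = (1 / d) * Real.logb 2 (∑ i, p i * (2 : ℝ) ^ (d * ((l i : ℝ) - ldag i))))
    (Hω Hα : ℝ)
    (hHω : Hω = (1 / (1 - ω)) * Real.logb 2 (∑ i, p i ^ ω))
    (hHα : Hα = (1 / (1 - α)) * Real.logb 2 (∑ i, p i ^ α))
    (lstar : Fin n → ℤ) (hkraft : ∑ i, (2 : ℝ) ^ (-((lstar i : ℝ))) ≤ 1)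
    (hopt : ∀ l : Fin n → ℤ, (∑ i, (2 : ℝ) ^ (-((l i : ℝ))) ≤ 1) → R lstar ≤ R l) :
    0 ≤ R lstar - α * b * (Hω - Hα) ∧ R lstar - α * b * (Hω - Hα) < 1 := by
  have : Nonempty (Fin n) := Fin.pos_iff_nonempty.1 hn
  have hαω : ω * (1 + d) = 1 + α * d := by
    rw [hα, hω]
    exact dabr_exponents_relation (by linarith) (by linarith)
  have hentropy : (1 + d) / d * logb 2 (∑ i, p i ^ ω) - logb 2 (∑ i, p i ^ α)
      = α * b * (Hω - Hα) := by
    rw [hHω, hHα, hα, hω]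
    exact dabr_entropy_gap_coeff (by linarith) (by linarith) hb0 hd0 _ _
  set q := escort ω p
  have hgap (l : Fin n → ℤ) :
      R l - α * b * (Hω - Hα) = expMean d q (fun i ↦ l i + logb 2 (q i)) := by
    have hldag' (i : Fin n) : ldag i = -logb 2 (escort α p i) := by
      rw [hldag, logb_escort hp, hα]
      ring
    have hRl : R l = expMean d p (fun i ↦ l i + logb 2 (escort α p i)) := by
      simp only [hR, expMean, hldag', sub_neg_eq_add]
    rw [hRl, expMean_add_logb_escort hp hd0 hαω, ← hentropy]
    ring
  have hq := escort_pos hp ω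
  have hq1 : ∑ i, q i = 1 := sum_escort hp ω
  constructor
  · rw [hgap]
    exact expMean_nonneg_of_kraft (fun i ↦ (hq i).le) hq1 hd.le hd0
      (by rwa [sum_mul_two_rpow_neg_add_logb hq])
  · set lc : Fin n → ℤ := fun i ↦ ⌈-logb 2 (q i)⌉
    have hkraft_lc : ∑ i, (2 : ℝ) ^ (-((lc i : ℝ))) ≤ 1 :=
      (sum_two_rpow_neg_ceil_neg_logb_le hq).trans hq1.le
    calc R lstar - α * b * (Hω - Hα) ≤ R lc - α * b * (Hω - Hα) := by
          linarith [hopt lc hkraft_lc]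
      _ = expMean d q (fun i ↦ lc i + logb 2 (q i)) := hgap lc
      _ < 1 := expMean_lt_of_forall_lt (fun i ↦ (hq i).le) hq1 hd0 fun i ↦ by
          linarith [Int.ceil_lt_add_one (-logb 2 (q i))]

theorem dabr_shannon_bounds (n : ℕ) (hn : 1 ≤ n) (p : Fin n → ℝ)
    (hp : ∀ i, 0 < p i) (hsum : ∑ i, p i = 1)
    (b d : ℝ) (hb : -1 < b) (hd : -1 < d) (hd0 : d ≠ 0) (hb0 : b ≠ 0)
    (hbd : -1 ≤ b + d)
    (α ω : ℝ) (hα : α = 1 / (1 + b)) (hω : ω = (1 + b + d) / ((1 + b) * (1 + d)))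
    (ldag : Fin n → ℝ)
    (hldag : ∀ i, ldag i = -(1 / (1 + b)) * Real.logb 2 (p i)
        + Real.logb 2 (∑ j, p j ^ (1 / (1 + b))))
    (R : (Fin n → ℤ) → ℝ)
    (hR : ∀ l, R l = (1 / d) * Real.logb 2 (∑ i, p i * (2 : ℝ) ^ (d * ((l i : ℝ) - ldag i))))
    (Hω Hα : ℝ)
    (hHω : Hω = (1 / (1 - ω)) * Real.logb 2 (∑ i, p i ^ ω))
    (hHα : Hα = (1 / (1 - α)) * Real.logb 2 (∑ i, p i ^ α))
    (lstar : Fin n → ℤ) (hkraft : ∑ i, (2 : ℝ) ^ (-((lstar i : ℝ))) ≤ 1)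
    (hopt : ∀ l : Fin n → ℤ, (∑ i, (2 : ℝ) ^ (-((l i : ℝ))) ≤ 1) → R lstar ≤ R l) :
    0 ≤ R lstar - α * b * (Hω - Hα) ∧ R lstar - α * b * (Hω - Hα) < 1 :=
  dabr_shannon_bounds_general n hn p hp b d hb hd hd0 hb0 α ω hα hω ldag hldag R hR Hω Hα hHω hHα
    lstar hkraft hopt
end

section
/- For d > 0 fixed, the function that maps probability mass function p and Kraft-feasible integer lengths l to (1/d)·log₂(Σ_i p_i·2^(d·l_i)) is bounded below by the exchange of b and d form: specifically, for any Kraft-feasible real l, (1/d)·log₂(Σ_i p_i·2^(d·l_i)) ≥ (1+d)/d · log₂(Σ_i p_i^(1/(1+d))), with equality iff l_i = -(1/(1+d))·log₂ p_i + log₂(Σ_j p_j^(1/(1+d))) for all i. -/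
/-!
Put `θ = 1 / (1 + d)`. With weights `w i = 2 ^ (-l i)` and values `f i = p i ^ θ * 2 ^ l i` one
has `w i * f i = p i ^ θ` and `w i * f i ^ (1 + d) = p i * 2 ^ (d * l i)`, so the weighted power
mean inequality reads
`∑ p i ^ θ ≤ (∑ 2 ^ (-l i)) ^ (1 - θ) * (∑ p i * 2 ^ (d * l i)) ^ θ`,
and Kraft's inequality bounds the first factor by `1`. Equality forces equality in Kraft's
inequality and, by strict convexity of `x ↦ x ^ (1 + d)`, a constant `f`; these two conditions
determine `l`.
-/

open Real Finset

namespace Real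

variable {ι : Type*}

theorem eq_of_weight_mul_Lp_le_inner {s : Finset ι} {p : ℝ} (hp : 1 < p) {w f : ι → ℝ}
    (hw : ∀ i ∈ s, 0 < w i) (hf : ∀ i ∈ s, 0 ≤ f i)
    (h : (∑ i ∈ s, w i) ^ (1 - p⁻¹) * (∑ i ∈ s, w i * f i ^ p) ^ p⁻¹ ≤
      ∑ i ∈ s, w i * f i)
    {j k : ι} (hj : j ∈ s) (hk : k ∈ s) : f j = f k := by
  set W := ∑ i ∈ s, w i
  set B := ∑ i ∈ s, w i * f i ^ p
  set C := ∑ i ∈ s, w i * f i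
  have hW : 0 < W := sum_pos hw ⟨j, hj⟩
  have hB : 0 ≤ B := sum_nonneg fun i hi ↦ mul_nonneg (hw i hi).le (rpow_nonneg (hf i hi) _)
  have hp₀ : 0 < p := by linarith
  have hpow : W ^ (p - 1) * B ≤ C ^ p := by
    have := rpow_le_rpow (by positivity) h hp₀.le
    rwa [mul_rpow (by positivity) (by positivity), ← rpow_mul hW.le, ← rpow_mul hB,
      inv_mul_cancel₀ hp₀.ne', rpow_one, sub_mul, one_mul, inv_mul_cancel₀ hp₀.ne'] at this
  have hjensen : ∑ i ∈ s, (w i / W) • f i ^ p ≤ (∑ i ∈ s, (w i / W) • f i) ^ p := by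
    simp only [smul_eq_mul, div_mul_eq_mul_div, ← sum_div]
    rw [div_rpow (sum_nonneg fun i hi ↦ mul_nonneg (hw i hi).le (hf i hi)) hW.le,
      div_le_div_iff₀ hW (by positivity)]
    rw [rpow_sub_one hW.ne', div_mul_eq_mul_div, div_le_iff₀ hW] at hpow
    linarith
  exact (strictConvexOn_rpow hp).eq_of_le_map_sum (fun i hi ↦ div_pos (hw i hi) hW)
    (by rw [← sum_div, div_self hW.ne']) (fun i hi ↦ hf i hi) hjensen hj hk

end Real

section KraftLengths

variable {ι : Type*} [Fintype ι] {p l : ι → ℝ} {d : ℝ}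

theorem two_rpow_neg_mul_mul_two_rpow (a y : ℝ) : (2 : ℝ) ^ (-y) * (a * 2 ^ y) = a := by
  rw [rpow_neg zero_le_two]
  field_simp

theorem two_rpow_neg_mul_rpow_inv_mul_two_rpow_rpow {x : ℝ} (y : ℝ) (hx : 0 ≤ x)
    (hd : 1 + d ≠ 0) :
    (2 : ℝ) ^ (-y) * (x ^ (1 + d)⁻¹ * 2 ^ y) ^ (1 + d) = x * 2 ^ (d * y) := by
  rw [mul_rpow (by positivity) (by positivity), ← rpow_mul hx, inv_mul_cancel₀ hd, rpow_one,
    ← rpow_mul zero_le_two, mul_left_comm, ← rpow_add zero_lt_two]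
  ring_nf

theorem sum_rpow_le_sum_two_rpow_neg_rpow_mul (hp : ∀ i, 0 ≤ p i) (hd : 0 ≤ d) :
    ∑ i, p i ^ (1 + d)⁻¹ ≤ (∑ i, (2 : ℝ) ^ (-l i)) ^ (1 - (1 + d)⁻¹) *
      (∑ i, p i * (2 : ℝ) ^ (d * l i)) ^ (1 + d)⁻¹ := by
  have := inner_le_weight_mul_Lp_of_nonneg univ (p := 1 + d) (by linarith)
    (fun i ↦ (2 : ℝ) ^ (-l i)) (fun i ↦ p i ^ (1 + d)⁻¹ * 2 ^ l i)
    (fun i ↦ rpow_nonneg zero_le_two _)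
    (fun i ↦ mul_nonneg (rpow_nonneg (hp i) _) (rpow_nonneg zero_le_two _))
  simpa only [two_rpow_neg_mul_mul_two_rpow,
    two_rpow_neg_mul_rpow_inv_mul_two_rpow_rpow _ (hp _) (by linarith : 1 + d ≠ 0)] using this

theorem sum_rpow_le_rpow_inv (hp : ∀ i, 0 ≤ p i) (hd : 0 ≤ d)
    (hkraft : ∑ i, (2 : ℝ) ^ (-l i) ≤ 1) :
    ∑ i, p i ^ (1 + d)⁻¹ ≤ (∑ i, p i * (2 : ℝ) ^ (d * l i)) ^ (1 + d)⁻¹ := by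
  have hA : 0 ≤ ∑ i, p i * (2 : ℝ) ^ (d * l i) :=
    sum_nonneg fun i _ ↦ mul_nonneg (hp i) (rpow_nonneg zero_le_two _)
  refine (sum_rpow_le_sum_two_rpow_neg_rpow_mul hp hd).trans
    (mul_le_of_le_one_left (by positivity) ?_)
  refine rpow_le_one (by positivity) hkraft (sub_nonneg.2 (inv_le_one_of_one_le₀ ?_))
  linarith

theorem sum_rpow_rpow_le (hp : ∀ i, 0 ≤ p i) (hd : 0 ≤ d)
    (hkraft : ∑ i, (2 : ℝ) ^ (-l i) ≤ 1) :
    (∑ i, p i ^ (1 + d)⁻¹) ^ (1 + d) ≤ ∑ i, p i * (2 : ℝ) ^ (d * l i) :=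
  (le_rpow_inv_iff_of_pos (sum_nonneg fun i _ ↦ rpow_nonneg (hp i) _)
    (sum_nonneg fun i _ ↦ mul_nonneg (hp i) (rpow_nonneg zero_le_two _)) (by linarith)).1
    (sum_rpow_le_rpow_inv hp hd hkraft)

theorem sum_two_rpow_neg_eq_one_of_sum_rpow_rpow_eq [Nonempty ι] (hp : ∀ i, 0 < p i)
    (hd : 0 < d) (hkraft : ∑ i, (2 : ℝ) ^ (-l i) ≤ 1)
    (h : (∑ i, p i ^ (1 + d)⁻¹) ^ (1 + d) = ∑ i, p i * (2 : ℝ) ^ (d * l i)) :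
    ∑ i, (2 : ℝ) ^ (-l i) = 1 := by
  have hS : 0 < ∑ i, p i ^ (1 + d)⁻¹ :=
    sum_pos (fun i _ ↦ rpow_pos_of_pos (hp i) _) univ_nonempty
  refine hkraft.antisymm (not_lt.1 fun hT ↦ ?_)
  have hholder := sum_rpow_le_sum_two_rpow_neg_rpow_mul (l := l) (fun i ↦ (hp i).le) hd.le
  rw [← h, ← rpow_mul hS.le, mul_inv_cancel₀ (by linarith), rpow_one] at hholder
  have hT' : (∑ i, (2 : ℝ) ^ (-l i)) ^ (1 - (1 + d)⁻¹) < 1 :=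
    rpow_lt_one (by positivity) hT (sub_pos.2 (inv_lt_one_of_one_lt₀ (by linarith)))
  exact hholder.not_gt (mul_lt_of_lt_one_left hS hT')

theorem sum_rpow_rpow_eq_iff (hp : ∀ i, 0 < p i) (hd : 0 < d)
    (hkraft : ∑ i, (2 : ℝ) ^ (-l i) ≤ 1) :
    (∑ i, p i ^ (1 + d)⁻¹) ^ (1 + d) = ∑ i, p i * (2 : ℝ) ^ (d * l i) ↔
      ∀ i, p i ^ (1 + d)⁻¹ * 2 ^ l i = ∑ j, p j ^ (1 + d)⁻¹ := by
  set S := ∑ i, p i ^ (1 + d)⁻¹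
  set A := ∑ i, p i * (2 : ℝ) ^ (d * l i)
  set T := ∑ i, (2 : ℝ) ^ (-l i)
  have hd₁ : 1 + d ≠ 0 := by linarith
  have hw (i) : (2 : ℝ) ^ (-l i) * (p i ^ (1 + d)⁻¹ * 2 ^ l i) = p i ^ (1 + d)⁻¹ :=
    two_rpow_neg_mul_mul_two_rpow _ _
  have hwf (i) :
      (2 : ℝ) ^ (-l i) * (p i ^ (1 + d)⁻¹ * 2 ^ l i) ^ (1 + d) = p i * 2 ^ (d * l i) :=
    two_rpow_neg_mul_rpow_inv_mul_two_rpow_rpow _ (hp i).le hd₁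
  constructor
  · intro h i
    have : Nonempty ι := ⟨i⟩
    have hT : T = 1 := sum_two_rpow_neg_eq_one_of_sum_rpow_rpow_eq hp hd hkraft h
    have hSA : A ^ (1 + d)⁻¹ = S := by
      rw [← h, ← rpow_mul (sum_nonneg fun j _ ↦ rpow_nonneg (hp j).le _),
        mul_inv_cancel₀ hd₁, rpow_one]
    have hconst : ∀ j, p j ^ (1 + d)⁻¹ * 2 ^ l j = p i ^ (1 + d)⁻¹ * 2 ^ l i := by
      intro j
      refine eq_of_weight_mul_Lp_le_inner (s := univ) (w := fun j ↦ (2 : ℝ) ^ (-l j))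
        (f := fun j ↦ p j ^ (1 + d)⁻¹ * 2 ^ l j) (lt_add_of_pos_right 1 hd)
        (fun j _ ↦ rpow_pos_of_pos zero_lt_two (-l j))
        (fun j _ ↦ mul_nonneg (rpow_nonneg (hp j).le _) (rpow_nonneg zero_le_two _))
        ?_ (mem_univ j) (mem_univ i)
      simp only [hw, hwf]
      change T ^ _ * A ^ _ ≤ S
      rw [hT, one_rpow, one_mul, hSA]
    have hTS : T * (p i ^ (1 + d)⁻¹ * 2 ^ l i) = S := by
      rw [sum_mul]
      exact sum_congr rfl fun j _ ↦ by rw [← hconst j, hw]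
    rwa [hT, one_mul] at hTS
  · intro h
    have hS : S = T * S := by
      rw [sum_mul]
      exact sum_congr rfl fun i _ ↦ by rw [← h i, hw]
    have hA : A = T * S ^ (1 + d) := by
      rw [sum_mul]
      exact sum_congr rfl fun i _ ↦ by rw [← h i, hwf]
    rw [hA, rpow_add' (sum_nonneg fun i _ ↦ (rpow_pos_of_pos (hp i) _).le) hd₁, rpow_one,
      ← mul_assoc, ← hS]

theorem rpow_mul_two_rpow_eq_iff {x a y S : ℝ} (hx : 0 < x) (hS : 0 < S) :
    x ^ a * 2 ^ y = S ↔ y = -a * logb 2 x + logb 2 S := by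
  have hxa : 0 < x ^ a := rpow_pos_of_pos hx a
  rw [mul_comm, ← eq_div_iff hxa.ne',
    ← logb_eq_iff_rpow_eq zero_lt_two (by norm_num) (div_pos hS hxa), logb_div hS.ne' hxa.ne',
    logb_rpow_eq_mul_logb_of_pos hx, eq_comm]
  ring_nf

end KraftLengths

theorem exp_average_lower_bound_with_equality_general (n : ℕ) (p : Fin n → ℝ)
    (hp : ∀ i, 0 < p i) (d : ℝ) (hd : 0 < d)
    (l : Fin n → ℝ) (hkraft : ∑ i, (2 : ℝ) ^ (-(l i)) ≤ 1) :
    (1 / d) * Real.logb 2 (∑ i, p i * (2 : ℝ) ^ (d * l i))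
      ≥ ((1 + d) / d) * Real.logb 2 (∑ i, p i ^ (1 / (1 + d))) ∧
    ((1 / d) * Real.logb 2 (∑ i, p i * (2 : ℝ) ^ (d * l i))
        = ((1 + d) / d) * Real.logb 2 (∑ i, p i ^ (1 / (1 + d)))
      ↔ ∀ i, l i = -(1 / (1 + d)) * Real.logb 2 (p i)
          + Real.logb 2 (∑ j, p j ^ (1 / (1 + d)))) := by
  rcases isEmpty_or_nonempty (Fin n) with _ | _
  · simp
  simp only [one_div (1 + d)]
  have hS : 0 < ∑ i, p i ^ (1 + d)⁻¹ :=
    sum_pos (fun i _ ↦ rpow_pos_of_pos (hp i) _) univ_nonempty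
  have hA : 0 < ∑ i, p i * (2 : ℝ) ^ (d * l i) :=
    sum_pos (fun i _ ↦ mul_pos (hp i) (rpow_pos_of_pos zero_lt_two _)) univ_nonempty
  have hlogS : (1 + d) / d * logb 2 (∑ i, p i ^ (1 + d)⁻¹) =
      1 / d * logb 2 ((∑ i, p i ^ (1 + d)⁻¹) ^ (1 + d)) := by
    rw [logb_rpow_eq_mul_logb_of_pos hS]
    ring
  rw [hlogS, ge_iff_le, mul_right_inj' (by positivity),
    (logb_injOn_pos one_lt_two).eq_iff hA (rpow_pos_of_pos hS _), eq_comm,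
    sum_rpow_rpow_eq_iff hp hd hkraft]
  refine ⟨?_, forall_congr' fun i ↦ rpow_mul_two_rpow_eq_iff (hp i) hS⟩
  gcongr 1 / d * ?_
  exact logb_le_logb_of_le one_lt_two (rpow_pos_of_pos hS _) <|
    sum_rpow_rpow_le (fun i ↦ (hp i).le) hd.le hkraft

theorem exp_average_lower_bound_with_equality (n : ℕ) (hn : 1 ≤ n) (p : Fin n → ℝ)
    (hp : ∀ i, 0 < p i) (hsum : ∑ i, p i = 1) (d : ℝ) (hd : 0 < d)
    (l : Fin n → ℝ) (hkraft : ∑ i, (2 : ℝ) ^ (-(l i)) ≤ 1) :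
    (1 / d) * Real.logb 2 (∑ i, p i * (2 : ℝ) ^ (d * l i))
      ≥ ((1 + d) / d) * Real.logb 2 (∑ i, p i ^ (1 / (1 + d))) ∧
    ((1 / d) * Real.logb 2 (∑ i, p i * (2 : ℝ) ^ (d * l i))
        = ((1 + d) / d) * Real.logb 2 (∑ i, p i ^ (1 / (1 + d)))
      ↔ ∀ i, l i = -(1 / (1 + d)) * Real.logb 2 (p i)
          + Real.logb 2 (∑ j, p j ^ (1 / (1 + d)))) :=
  exp_average_lower_bound_with_equality_general n p hp d hd l hkraft
end
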